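/- Every finite directed acyclic graph G with a unique sink z, maximum in-degree at most δ, and depth at most d (where the depth is the maximum number of edges on a directed path in G) has a persistent reversible pebbling using space at most d·δ + 1. -/

import Mathlib

open MvPolynomial

/-- A finite directed graph. -/
structure FinDigraph where
  V : Type
  [instFintype : Fintype V]
  Edge : V → V → Prop

attribute [instance] FinDigraph.instFintype

namespace FinDigraph

/-- The set of (immediate) predecessors of a vertex. -/
def pred (G : FinDigraph) (v : G.V) : Set G.V := {u | G.Edge u v}

/-- A directed graph is acyclic if no vertex reaches itself by a nonempty path. -/
def Acyclic (G : FinDigraph) : Prop := ∀ v, ¬ Relation.TransGen G.Edge v v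

/-- A sink is a vertex with no outgoing edge. -/
def IsSink (G : FinDigraph) (z : G.V) : Prop := ∀ u, ¬ G.Edge z u

/-- `z` is the unique sink of `G`. -/
def UniqueSink (G : FinDigraph) (z : G.V) : Prop :=
  G.IsSink z ∧ ∀ v, G.IsSink v → v = z

/-- One legal move of the reversible pebble game: place a pebble on a vertex all of whose
predecessors are pebbled, or remove a pebble from such a vertex. -/
def RevMove (G : FinDigraph) (P Q : Set G.V) : Prop :=
  ∃ v, G.pred v ⊆ P ∧
    ((v ∉ P ∧ Q = insert v P) ∨ (v ∈ P ∧ Q = P \ {v}))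

/-- One legal move of the standard pebble game: place a pebble on a vertex all of whose
predecessors are pebbled, or remove a pebble from an arbitrary vertex. -/
def StdMove (G : FinDigraph) (P Q : Set G.V) : Prop :=
  (∃ v, G.pred v ⊆ P ∧ v ∉ P ∧ Q = insert v P) ∨ (∃ v, v ∈ P ∧ Q = P \ {v})

/-- A reversible pebbling of `G` (with sink `z`) with time `t`. -/
def IsRevPebbling (G : FinDigraph) (z : G.V) (t : ℕ) (P : ℕ → Set G.V) : Prop :=
  P 0 = ∅ ∧ P t = ∅ ∧ (∃ i ≤ t, z ∈ P i) ∧ ∀ i < t, G.RevMove (P i) (P (i + 1))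

/-- A standard pebbling of `G` (with sink `z`) with time `t`. -/
def IsStdPebbling (G : FinDigraph) (z : G.V) (t : ℕ) (P : ℕ → Set G.V) : Prop :=
  P 0 = ∅ ∧ P t = ∅ ∧ (∃ i ≤ t, z ∈ P i) ∧ ∀ i < t, G.StdMove (P i) (P (i + 1))

/-- The space of a pebbling: the maximal number of pebbles in any configuration. -/
noncomputable def space (G : FinDigraph) (t : ℕ) (P : ℕ → Set G.V) : ℕ :=
  (Finset.range (t + 1)).sup fun i => (P i).ncard

end FinDigraph

namespace FinDigraph

/-- A persistent reversible pebbling: it starts with the empty configuration and ends with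
exactly one pebble, on the sink `z`. -/
def IsPersistentRevPebbling (G : FinDigraph) (z : G.V) (t : ℕ) (P : ℕ → Set G.V) : Prop :=
  P 0 = ∅ ∧ P t = {z} ∧ ∀ i < t, G.RevMove (P i) (P (i + 1))

/-- The depth of `G` is at most `d`: every directed path has at most `d` edges. -/
def DepthAtMost (G : FinDigraph) (d : ℕ) : Prop :=
  ∀ (k : ℕ) (f : ℕ → G.V), (∀ i < k, G.Edge (f i) (f (i + 1))) → k ≤ d

end FinDigraph

/-!
Let the height of a vertex be the length of the longest path ending at it. A vertex `v` of
height at most `n` is pebbled, touching only its ancestors and with at most `n * δ + 1` pebbles,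
as follows: pebble its predecessors one after the other, each by the same procedure for height
`n - 1` while the fewer than `δ` predecessors already pebbled stay in place; place a pebble on
`v`; then run the predecessor phase backwards, which is legal because reversible moves can be
undone. Pebbles outside the ancestors of `u` do not disturb a pebbling of `u`, so the
predecessors are processed in an order in which none is an ancestor of a later one.
-/

namespace Relation.ReflTransGen

theorem exists_seq {α : Type*} {r : α → α → Prop} {a b : α} (h : ReflTransGen r a b) :
    ∃ (t : ℕ) (f : ℕ → α), f 0 = a ∧ f t = b ∧ ∀ i < t, r (f i) (f (i + 1)) := by
  induction h using ReflTransGen.head_induction_on with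
  | refl => exact ⟨0, fun _ => b, rfl, rfl, by simp⟩
  | @head a c hac _ ih =>
    obtain ⟨t, f, hf0, hft, hf⟩ := ih
    refine ⟨t + 1, fun | 0 => a | i + 1 => f i, rfl, hft, ?_⟩
    rintro (_ | i) hi
    · simpa [hf0] using hac
    · exact hf i (by omega)

end Relation.ReflTransGen

namespace FinDigraph

open Relation Set

variable {G : FinDigraph}

def ancestors (G : FinDigraph) (v : G.V) : Set G.V := {u | ReflTransGen G.Edge u v}

@[simp]
theorem mem_pred {u v : G.V} : u ∈ G.pred v ↔ G.Edge u v := Iff.rfl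

theorem self_mem_ancestors (v : G.V) : v ∈ G.ancestors v :=
  ReflTransGen.refl

def HeightAtMost (G : FinDigraph) (v : G.V) (n : ℕ) : Prop :=
  ∀ (k : ℕ) (f : ℕ → G.V), (∀ i < k, G.Edge (f i) (f (i + 1))) → f k = v → k ≤ n

theorem DepthAtMost.heightAtMost {d : ℕ} (h : G.DepthAtMost d) (v : G.V) :
    G.HeightAtMost v d :=
  fun k f hf _ => h k f hf

theorem HeightAtMost.of_edge {u v : G.V} {n : ℕ} (hv : G.HeightAtMost v (n + 1))
    (huv : G.Edge u v) : G.HeightAtMost u n := by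
  intro k f hf hfk
  suffices k + 1 ≤ n + 1 by omega
  refine hv (k + 1) (fun i => if i ≤ k then f i else v) (fun i hi => ?_) (by simp)
  rcases Nat.lt_or_ge i k with hik | hik
  · simpa [hik.le, Nat.succ_le_of_lt hik] using hf i hik
  · obtain rfl : i = k := by omega
    simpa [hfk] using huv

theorem HeightAtMost.pred_eq_empty {v : G.V} (hv : G.HeightAtMost v 0) : G.pred v = ∅ :=
  eq_empty_of_forall_notMem fun u huv =>
    absurd (hv 1 (fun i => if i = 0 then u else v) (by simpa using huv) rfl) (by omega)

theorem Acyclic.not_edge_self (hacy : G.Acyclic) (v : G.V) : ¬ G.Edge v v :=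
  fun h => hacy v (TransGen.single h)

theorem Acyclic.exists_forall_not_transGen (hacy : G.Acyclic) {T : Finset G.V}
    (hT : T.Nonempty) : ∃ u ∈ T, ∀ w ∈ T, ¬ TransGen G.Edge u w := by
  have : IsTrans G.V (flip (TransGen G.Edge)) := ⟨fun _ _ _ hab hbc => hbc.trans hab⟩
  have : Std.Irrefl (flip (TransGen G.Edge)) := ⟨hacy⟩
  exact (Finite.wellFounded_of_trans_of_irrefl (flip (TransGen G.Edge))).has_min (T : Set G.V) hT

theorem RevMove.symm (hacy : G.Acyclic) {P Q : Set G.V} (h : G.RevMove P Q) :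
    G.RevMove Q P := by
  obtain ⟨v, hpred, ⟨hv, rfl⟩ | ⟨hv, rfl⟩⟩ := h
  · exact ⟨v, hpred.trans (subset_insert v P),
      Or.inr ⟨mem_insert v P, (insert_sdiff_self_of_notMem hv).symm⟩⟩
  · refine ⟨v, fun u hu => ⟨hpred hu, ?_⟩, Or.inl ⟨fun h => h.2 rfl, by simp [hv]⟩⟩
    rintro rfl
    exact hacy.not_edge_self u hu

theorem RevMove.insert_of_notMem {P Q : Set G.V} {w : G.V} (h : G.RevMove P Q) (hP : w ∉ P)
    (hQ : w ∉ Q) : G.RevMove (insert w P) (insert w Q) := by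
  obtain ⟨v, hpred, ⟨hv, rfl⟩ | ⟨hv, rfl⟩⟩ := h
  · have hvw : v ≠ w := fun h => hQ (h ▸ mem_insert v P)
    exact ⟨v, hpred.trans (subset_insert w P),
      Or.inl ⟨by simp [hv, hvw], insert_comm w v P⟩⟩
  · have hwv : w ≠ v := (ne_of_mem_of_not_mem hv hP).symm
    exact ⟨v, hpred.trans (subset_insert w P),
      Or.inr ⟨mem_insert_of_mem w hv, insert_sdiff_singleton_comm hwv P⟩⟩

def RevMoveWithin (G : FinDigraph) (A : Set G.V) (s : ℕ) (P Q : Set G.V) : Prop :=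
  G.RevMove P Q ∧ P ⊆ A ∧ Q ⊆ A ∧ P.ncard ≤ s ∧ Q.ncard ≤ s

def ReachWithin (G : FinDigraph) (A : Set G.V) (s : ℕ) : Set G.V → Set G.V → Prop :=
  ReflTransGen (G.RevMoveWithin A s)

section ReachWithin

variable {A B : Set G.V} {s t : ℕ} {P Q R : Set G.V}

theorem ReachWithin.refl : G.ReachWithin A s P P :=
  ReflTransGen.refl

theorem ReachWithin.trans (hPQ : G.ReachWithin A s P Q) (hQR : G.ReachWithin A s Q R) :
    G.ReachWithin A s P R :=
  ReflTransGen.trans hPQ hQR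

theorem ReachWithin.mono (h : G.ReachWithin A s P Q) (hAB : A ⊆ B) (hst : s ≤ t) :
    G.ReachWithin B t P Q :=
  ReflTransGen.mono (fun _ _ ⟨hm, hPA, hQA, hP, hQ⟩ =>
    ⟨hm, hPA.trans hAB, hQA.trans hAB, hP.trans hst, hQ.trans hst⟩) P Q h

theorem ReachWithin.symm (hacy : G.Acyclic) (h : G.ReachWithin A s P Q) :
    G.ReachWithin A s Q P :=
  ReflTransGen.mono (fun _ _ ⟨hm, hPA, hQA, hP, hQ⟩ => ⟨hm.symm hacy, hQA, hPA, hQ, hP⟩) Q P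
    (reflTransGen_swap.mpr h)

theorem ReachWithin.insert_of_notMem {v : G.V} (h : G.ReachWithin A s P Q) (hv : v ∉ A) :
    G.ReachWithin (insert v A) (s + 1) (insert v P) (insert v Q) :=
  ReflTransGen.lift (insert v) (fun _ _ ⟨hm, hPA, hQA, hP, hQ⟩ =>
    ⟨hm.insert_of_notMem (fun h => hv (hPA h)) (fun h => hv (hQA h)), insert_subset_insert hPA,
      insert_subset_insert hQA, (ncard_insert_le _ _).trans (by omega),
      (ncard_insert_le _ _).trans (by omega)⟩) P Q h

theorem reachWithin_insert_of_pred_subset {v : G.V} (hpred : G.pred v ⊆ P) (hv : v ∉ P)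
    (hA : insert v P ⊆ A) (hs : (insert v P).ncard ≤ s) :
    G.ReachWithin A s P (insert v P) :=
  ReflTransGen.single ⟨⟨v, hpred, Or.inl ⟨hv, rfl⟩⟩, (subset_insert v P).trans hA, hA,
    (ncard_le_ncard (subset_insert v P)).trans hs, hs⟩

end ReachWithin

theorem reachWithin_biUnion_ancestors (hacy : G.Acyclic) {s : ℕ} (T : Finset G.V)
    (h : ∀ u ∈ T, G.ReachWithin (G.ancestors u) (s + 1) ∅ {u}) :
    G.ReachWithin (⋃ u ∈ T, G.ancestors u) (T.card + s) ∅ T := by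
  classical
  induction T using Finset.strongInduction with
  | H T ih =>
  rcases T.eq_empty_or_nonempty with rfl | hne
  · simpa using ReachWithin.refl
  -- `u` goes first: its pebble then lies outside the ancestors of the rest of `T`
  obtain ⟨u, hu, hmax⟩ := hacy.exists_forall_not_transGen hne
  have hrest := ih (T.erase u) (Finset.erase_ssubset hu)
    fun w hw => h w (Finset.mem_of_mem_erase hw)
  have hu_rest : u ∉ ⋃ w ∈ T.erase u, G.ancestors w := by
    simp only [mem_iUnion]
    rintro ⟨w, hw, huw⟩
    rcases reflTransGen_iff_eq_or_transGen.mp huw with rfl | huw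
    · exact Finset.ne_of_mem_erase hw rfl
    · exact hmax w (Finset.mem_of_mem_erase hw) huw
  have hsub : insert u (⋃ w ∈ T.erase u, G.ancestors w) ⊆ ⋃ w ∈ T, G.ancestors w :=
    insert_subset (mem_biUnion hu (self_mem_ancestors u))
      (biUnion_subset_biUnion_left fun w hw => Finset.mem_of_mem_erase hw)
  have hcard : (T.erase u).card + s + 1 = T.card + s := by
    rw [add_right_comm, Finset.card_erase_add_one hu]
  have hT : insert u ((T.erase u : Finset G.V) : Set G.V) = T := by
    rw [Finset.coe_erase, insert_sdiff_singleton, insert_eq_of_mem (Finset.mem_coe.2 hu)]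
  refine ((h u hu).mono (subset_biUnion_of_mem hu) (by omega)).trans ?_
  have := (hrest.insert_of_notMem hu_rest).mono hsub hcard.le
  rwa [hT, insert_empty_eq] at this

theorem reachWithin_ancestors_singleton (hacy : G.Acyclic) {s : ℕ} (v : G.V)
    (h : ∀ u ∈ G.pred v, G.ReachWithin (G.ancestors u) (s + 1) ∅ {u}) :
    G.ReachWithin (G.ancestors v) ((G.pred v).ncard + s + 1) ∅ {v} := by
  set T := (G.pred v).toFinite.toFinset
  have hT : (T : Set G.V) = G.pred v := Finite.coe_toFinset _
  have hcard : T.card = (G.pred v).ncard := (ncard_eq_toFinset_card _).symm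
  have hpreds := reachWithin_biUnion_ancestors hacy T fun u hu => h u (by simpa [T] using hu)
  rw [hT, hcard] at hpreds
  have hsub : ⋃ u ∈ T, G.ancestors u ⊆ G.ancestors v :=
    iUnion₂_subset fun u hu => fun w hw => ReflTransGen.tail hw (by simpa [T] using hu)
  have hv : v ∉ ⋃ u ∈ T, G.ancestors u := by
    simp only [mem_iUnion]
    rintro ⟨u, hu, hvu⟩
    exact hacy v (TransGen.tail' hvu (by simpa [T] using hu))
  have hplace : G.ReachWithin (G.ancestors v) ((G.pred v).ncard + s + 1)
      (G.pred v) (insert v (G.pred v)) :=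
    reachWithin_insert_of_pred_subset subset_rfl (hacy.not_edge_self v)
      (insert_subset (self_mem_ancestors v) fun u hu => ReflTransGen.single hu)
      ((ncard_insert_le _ _).trans (by omega))
  refine ((hpreds.mono hsub (by omega)).trans hplace).trans ?_
  simpa using ((hpreds.symm hacy).insert_of_notMem hv).mono
    (insert_subset (self_mem_ancestors v) hsub) (by omega)

theorem reachWithin_of_heightAtMost (hacy : G.Acyclic) {δ : ℕ}
    (hdeg : ∀ v, (G.pred v).ncard ≤ δ) :
    ∀ (n : ℕ) (v : G.V), G.HeightAtMost v n →
      G.ReachWithin (G.ancestors v) (n * δ + 1) ∅ {v}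
  | 0, v, hv => by
    simpa [hv.pred_eq_empty] using
      reachWithin_ancestors_singleton hacy v (s := 0) (by simp [hv.pred_eq_empty])
  | n + 1, v, hv =>
    (reachWithin_ancestors_singleton hacy v fun u hu =>
      reachWithin_of_heightAtMost hacy hdeg n u (hv.of_edge hu)).mono subset_rfl
      (by rw [Nat.succ_mul]; have := hdeg v; omega)

end FinDigraph

theorem persistent_reversible_pebbling_of_depth_general (G : FinDigraph) (hacy : G.Acyclic)
    (z : G.V) (δ d : ℕ)
    (hdeg : ∀ v, (G.pred v).ncard ≤ δ) (hdepth : G.DepthAtMost d) :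
    ∃ (t : ℕ) (P : ℕ → Set G.V),
      G.IsPersistentRevPebbling z t P ∧ G.space t P ≤ d * δ + 1 := by
  obtain ⟨t, P, hP0, hPt, hmove⟩ := Relation.ReflTransGen.exists_seq
    (FinDigraph.reachWithin_of_heightAtMost hacy hdeg d z (hdepth.heightAtMost z))
  refine ⟨t, P, ⟨hP0, hPt, fun i hi => (hmove i hi).1⟩, Finset.sup_le fun i hi => ?_⟩
  cases i with
  | zero => simp [hP0]
  | succ i => exact (hmove i (Nat.lt_of_succ_lt_succ (Finset.mem_range.mp hi))).2.2.2.2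

/-- Every finite DAG with a unique sink `z`, maximum in-degree at most `δ` and
depth at most `d` has a persistent reversible pebbling using space at most `d * δ + 1`. -/
theorem persistent_reversible_pebbling_of_depth (G : FinDigraph) (hacy : G.Acyclic)
    (z : G.V) (hz : G.UniqueSink z) (δ d : ℕ)
    (hdeg : ∀ v, (G.pred v).ncard ≤ δ) (hdepth : G.DepthAtMost d) :
    ∃ (t : ℕ) (P : ℕ → Set G.V),
      G.IsPersistentRevPebbling z t P ∧ G.space t P ≤ d * δ + 1 :=
  persistent_reversible_pebbling_of_depth_general G hacy z δ d hdeg hdepth
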